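/- arXiv:1405.3576 — 5 statements merged into one kernel-verified Lean document; each statement's English description precedes it below -/
import Mathlib

section
/- For every word w over Δ and every index i ∈ {1,…,n}, the image φ(Q,w) intersects Q_i nontrivially (φ(Q,w) ∩ Q_i ≠ ∅) if and only if w contains no occurrence of the letters y and z, i.e. w ∈ (Σ∪{x})*. -/
/-- The transition function of a DFA extended to words (read left to right). -/
def deltaStar {Q A : Type} (δ : Q → A → Q) (q : Q) (w : List A) : Q :=
  w.foldl δ q

/-- `w` is a reset word for the DFA with transition function `δ`. -/
def IsReset {Q A : Type} (δ : Q → A → Q) (w : List A) : Prop :=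
  ∀ q q' : Q, deltaStar δ q w = deltaStar δ q' w

/-- The set of reset words of a DFA. -/
def Syn {Q A : Type} (δ : Q → A → Q) : Set (List A) :=
  {w | IsReset δ w}

/-- The alphabet Δ = Σ ∪ {x,y,z}: `Sum.inl a` is a letter of Σ, and
`Sum.inr 0`, `Sum.inr 1`, `Sum.inr 2` are the new letters x, y, z. -/
abbrev Alph (σ : Type) : Type := σ ⊕ Fin 3

def xL {σ : Type} : Alph σ := Sum.inr 0
def yL {σ : Type} : Alph σ := Sum.inr 1
def zL {σ : Type} : Alph σ := Sum.inr 2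

/-- The state set Q of the DFA 𝒜: the disjoint union of the state sets `Qst i`
of the DFAs `M i`, together with two new states: `Sum.inr false` is the sink `s`
and `Sum.inr true` is the state `h`. -/
abbrev StA {n : ℕ} (Qst : Fin n → Type) : Type := (Σ i, Qst i) ⊕ Bool

def sA {n : ℕ} {Qst : Fin n → Type} : StA Qst := Sum.inr false
def hA {n : ℕ} {Qst : Fin n → Type} : StA Qst := Sum.inr true

/-- The transition function φ of the DFA 𝒜. -/
def phi {n : ℕ} {σ : Type} {Qst : Fin n → Type}
    (δi : ∀ i, Qst i → σ → Qst i) (qinit : ∀ i, Qst i)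
    (Fi : ∀ i, Set (Qst i)) [∀ i, DecidablePred (· ∈ Fi i)] :
    StA Qst → Alph σ → StA Qst
  | Sum.inl ⟨i, q⟩, Sum.inl a => Sum.inl ⟨i, δi i q a⟩
  | Sum.inl ⟨i, q⟩, Sum.inr k =>
      if k = 0 then Sum.inl ⟨i, qinit i⟩          -- φ(q, x) = qᵢ
      else if k = 1 then sA                        -- φ(q, y) = s
      else if q ∈ Fi i then sA else hA             -- φ(q, z) = s on Fᵢ, h off Fᵢ
  | Sum.inr _, _ => sA                             -- φ(s,·) = φ(h,·) = s

/-- The language accepted by the DFA `M i = ⟨Qst i, σ, δi i, qinit i, Fi i⟩`. -/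
def LM {n : ℕ} {σ : Type} {Qst : Fin n → Type}
    (δi : ∀ i, Qst i → σ → Qst i) (qinit : ∀ i, Qst i)
    (Fi : ∀ i, Set (Qst i)) (i : Fin n) : Set (List σ) :=
  {w | deltaStar (δi i) (qinit i) w ∈ Fi i}

/-- `w ∈ (Σ ∪ {x})*`, i.e. `w` contains no occurrence of the letters y and z. -/
def noYZ {σ : Type} (w : List (Alph σ)) : Prop := yL ∉ w ∧ zL ∉ w

/-- L₁ = (Σ∪{x})* y Δ* -/
def L1 {σ : Type} : Set (List (Alph σ)) :=
  {w | ∃ u v, noYZ u ∧ w = u ++ yL :: v}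

/-- L₂ = (Σ∪{x})* z Δ⁺ -/
def L2 {σ : Type} : Set (List (Alph σ)) :=
  {w | ∃ u v, noYZ u ∧ v ≠ [] ∧ w = u ++ zL :: v}

/-- The ideal language I = L₁ ∪ L₂. -/
def ISet {σ : Type} : Set (List (Alph σ)) := L1 ∪ L2

/-! The letters y and z send every state into the trap {s, h}, which φ never leaves, while the
letters of Σ ∪ {x} keep each component Qᵢ invariant. So the image of a word meets Qᵢ exactly when
the word avoids y and z; the start state qᵢ witnesses the converse. -/

theorem deltaStar_cons {Q A : Type} (δ : Q → A → Q) (q : Q) (a : A) (w : List A) :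
    deltaStar δ q (a :: w) = deltaStar δ (δ q a) w :=
  rfl

theorem deltaStar_append {Q A : Type} (δ : Q → A → Q) (q : Q) (u v : List A) :
    deltaStar δ q (u ++ v) = deltaStar δ (deltaStar δ q u) v :=
  List.foldl_append

theorem deltaStar_mem_of_mapsTo {Q A : Type} {δ : Q → A → Q} {S : Set Q} {w : List A}
    (hS : ∀ a ∈ w, Set.MapsTo (δ · a) S S) {q : Q} (hq : q ∈ S) : deltaStar δ q w ∈ S := by
  induction w generalizing q with
  | nil => exact hq
  | cons a w ih =>
    exact ih (fun b hb => hS b (List.mem_cons_of_mem a hb)) (hS a List.mem_cons_self hq)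

section phi

variable {n : ℕ} {σ : Type} {Qst : Fin n → Type}
  (δi : ∀ i, Qst i → σ → Qst i) (qinit : ∀ i, Qst i)
  (Fi : ∀ i, Set (Qst i)) [∀ i, DecidablePred (· ∈ Fi i)]

theorem phi_mapsTo_range_inr (a : Alph σ) :
    Set.MapsTo (phi δi qinit Fi · a) (Set.range Sum.inr) (Set.range Sum.inr) := by
  rintro _ ⟨b, rfl⟩
  exact ⟨false, rfl⟩

theorem phi_mem_range_inr {c : Alph σ} (hc : c = yL ∨ c = zL) (q : StA Qst) :
    phi δi qinit Fi q c ∈ Set.range Sum.inr := by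
  rcases q with ⟨j, p⟩ | b
  · rcases hc with rfl | rfl
    · exact ⟨false, rfl⟩
    · by_cases hp : p ∈ Fi j <;> simp [phi, zL, sA, hA, hp]
  · exact ⟨false, rfl⟩

theorem phi_mapsTo_range_inl {a : Alph σ} (hy : a ≠ yL) (hz : a ≠ zL) (i : Fin n) :
    Set.MapsTo (phi δi qinit Fi · a) (Set.range fun p : Qst i => Sum.inl ⟨i, p⟩)
      (Set.range fun p : Qst i => Sum.inl ⟨i, p⟩) := by
  rintro _ ⟨p, rfl⟩
  rcases a with s | k
  · exact ⟨δi i p s, rfl⟩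
  · fin_cases k
    · exact ⟨qinit i, rfl⟩
    · exact absurd rfl hy
    · exact absurd rfl hz

theorem deltaStar_phi_mem_range_inr {c : Alph σ} (hc : c = yL ∨ c = zL) {w : List (Alph σ)}
    (hw : c ∈ w) (q : StA Qst) : deltaStar (phi δi qinit Fi) q w ∈ Set.range Sum.inr := by
  obtain ⟨u, v, rfl⟩ := List.append_of_mem hw
  rw [deltaStar_append, deltaStar_cons]
  exact deltaStar_mem_of_mapsTo (fun a _ => phi_mapsTo_range_inr δi qinit Fi a)
    (phi_mem_range_inr δi qinit Fi hc _)

end phi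

theorem image_meets_Qi_iff_noYZ_general
    (n : ℕ) (σ : Type) (Qst : Fin n → Type)
    (δi : ∀ i, Qst i → σ → Qst i) (qinit : ∀ i, Qst i)
    (Fi : ∀ i, Set (Qst i)) [∀ i, DecidablePred (· ∈ Fi i)]
    (w : List (Alph σ)) (i : Fin n) :
    (∃ (q : StA Qst) (p : Qst i),
        deltaStar (phi δi qinit Fi) q w = Sum.inl ⟨i, p⟩) ↔ noYZ w := by
  constructor
  · rintro ⟨q, p, hq⟩
    have not_trapped : deltaStar (phi δi qinit Fi) q w ∉ Set.range Sum.inr := by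
      rw [hq]
      rintro ⟨b, hb⟩
      exact Sum.inr_ne_inl hb
    exact ⟨fun hy => not_trapped (deltaStar_phi_mem_range_inr δi qinit Fi (.inl rfl) hy q),
      fun hz => not_trapped (deltaStar_phi_mem_range_inr δi qinit Fi (.inr rfl) hz q)⟩
  · rintro ⟨hy, hz⟩
    obtain ⟨p, hp⟩ := deltaStar_mem_of_mapsTo (fun a ha => phi_mapsTo_range_inl δi qinit Fi
      (ne_of_mem_of_not_mem ha hy) (ne_of_mem_of_not_mem ha hz) i) ⟨qinit i, rfl⟩
    exact ⟨_, p, hp.symm⟩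

/-- For every word w over Δ and every i, φ(Q,w) ∩ Qᵢ ≠ ∅ iff w ∈ (Σ∪{x})*. -/
theorem image_meets_Qi_iff_noYZ
    (n : ℕ) (hn : 0 < n) (σ : Type) [Fintype σ]
    (Qst : Fin n → Type) [∀ i, Fintype (Qst i)]
    (δi : ∀ i, Qst i → σ → Qst i) (qinit : ∀ i, Qst i)
    (Fi : ∀ i, Set (Qst i)) [∀ i, DecidablePred (· ∈ Fi i)]
    (hno : ∀ i (q : Qst i) (a : σ), δi i q a ≠ qinit i)
    (hqF : ∀ i, qinit i ∉ Fi i)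
    (w : List (Alph σ)) (i : Fin n) :
    (∃ (q : StA Qst) (p : Qst i),
        deltaStar (phi δi qinit Fi) q w = Sum.inl ⟨i, p⟩) ↔ noYZ w :=
  image_meets_Qi_iff_noYZ_general n σ Qst δi qinit Fi w i
end

section
/- For any word w over Δ, the image φ(Q,w) intersects Q_i nontrivially for every i = 1,…,n if and only if there exists some j ∈ {1,…,n} such that φ(Q,w) intersects Q_j nontrivially. -/
theorem deltaStar_mem {Q A : Type} (δ : Q → A → Q) (S : Set Q) {w : List A}
    (hS : ∀ a ∈ w, ∀ q ∈ S, δ q a ∈ S) {q : Q} (hq : q ∈ S) : deltaStar δ q w ∈ S := by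
  induction w generalizing q with
  | nil => exact hq
  | cons a w ih =>
    rw [deltaStar_cons]
    exact ih (fun b hb => hS b (List.mem_cons_of_mem a hb)) (hS a List.mem_cons_self q hq)

section phi

variable {n : ℕ} {σ : Type} {Qst : Fin n → Type}
  (δi : ∀ i, Qst i → σ → Qst i) (qinit : ∀ i, Qst i)
  (Fi : ∀ i, Set (Qst i)) [∀ i, DecidablePred (· ∈ Fi i)]

theorem phi_isRight_of_isRight {p : StA Qst} (hp : p.isRight) (c : Alph σ) :
    (phi δi qinit Fi p c).isRight := by
  rcases p with _ | b
  · simp at hp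
  · rfl

theorem phi_isRight_of_eq_yL_or_eq_zL (p : StA Qst) {c : Alph σ} (hc : c = yL ∨ c = zL) :
    (phi δi qinit Fi p c).isRight := by
  rcases p with ⟨i, q⟩ | b
  · rcases hc with rfl | rfl
    · rfl
    · change (if q ∈ Fi i then (sA : StA Qst) else hA).isRight
      split_ifs <;> rfl
  · rfl

theorem phi_inl_of_ne_yL_of_ne_zL (i : Fin n) (q : Qst i) {c : Alph σ} (hy : c ≠ yL)
    (hz : c ≠ zL) : ∃ q', phi δi qinit Fi (Sum.inl ⟨i, q⟩) c = Sum.inl ⟨i, q'⟩ := by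
  rcases c with a | k
  · exact ⟨δi i q a, rfl⟩
  · fin_cases k
    · exact ⟨qinit i, rfl⟩
    · exact absurd rfl hy
    · exact absurd rfl hz

theorem ne_yL_and_ne_zL_of_deltaStar_eq_inl {q : StA Qst} {w : List (Alph σ)}
    {s : Σ i, Qst i} (h : deltaStar (phi δi qinit Fi) q w = Sum.inl s) :
    ∀ c ∈ w, c ≠ yL ∧ c ≠ zL := by
  intro c hc
  by_contra hyz
  rw [not_and_or, not_not, not_not] at hyz
  obtain ⟨u, v, rfl⟩ := List.append_of_mem hc
  have trapped := deltaStar_mem (phi δi qinit Fi) {p | p.isRight} (w := v)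
    (fun _ _ _ hp => phi_isRight_of_isRight δi qinit Fi hp _)
    (phi_isRight_of_eq_yL_or_eq_zL δi qinit Fi (deltaStar (phi δi qinit Fi) q u) hyz)
  rw [← deltaStar_cons, ← deltaStar_append, h] at trapped
  simp at trapped

theorem deltaStar_inl_of_ne_yL_and_ne_zL {w : List (Alph σ)} (hw : ∀ c ∈ w, c ≠ yL ∧ c ≠ zL)
    (i : Fin n) (q : Qst i) :
    ∃ q', deltaStar (phi δi qinit Fi) (Sum.inl ⟨i, q⟩) w = Sum.inl ⟨i, q'⟩ :=
  deltaStar_mem (phi δi qinit Fi) {p | ∃ q', p = Sum.inl ⟨i, q'⟩}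
    (fun c hc _ ⟨r, hr⟩ => hr ▸ phi_inl_of_ne_yL_of_ne_zL δi qinit Fi i r (hw c hc).1 (hw c hc).2)
    ⟨q, rfl⟩

end phi

theorem image_meets_all_iff_meets_some_general
    (n : ℕ) (hn : 0 < n) (σ : Type)
    (Qst : Fin n → Type)
    (δi : ∀ i, Qst i → σ → Qst i) (qinit : ∀ i, Qst i)
    (Fi : ∀ i, Set (Qst i)) [∀ i, DecidablePred (· ∈ Fi i)]
    (w : List (Alph σ)) :
    (∀ i : Fin n, ∃ (q : StA Qst) (p : Qst i),
        deltaStar (phi δi qinit Fi) q w = Sum.inl ⟨i, p⟩) ↔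
    (∃ (j : Fin n) (q : StA Qst) (p : Qst j),
        deltaStar (phi δi qinit Fi) q w = Sum.inl ⟨j, p⟩) := by
  refine ⟨fun h => ⟨⟨0, hn⟩, h _⟩, ?_⟩
  rintro ⟨j, q, p, h⟩ i
  have hw := ne_yL_and_ne_zL_of_deltaStar_eq_inl δi qinit Fi h
  obtain ⟨p', hp'⟩ := deltaStar_inl_of_ne_yL_and_ne_zL δi qinit Fi hw i (qinit i)
  exact ⟨_, p', hp'⟩

/-- φ(Q,w) meets every Qᵢ iff it meets some Q_j. -/
theorem image_meets_all_iff_meets_some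
    (n : ℕ) (hn : 0 < n) (σ : Type) [Fintype σ]
    (Qst : Fin n → Type) [∀ i, Fintype (Qst i)]
    (δi : ∀ i, Qst i → σ → Qst i) (qinit : ∀ i, Qst i)
    (Fi : ∀ i, Set (Qst i)) [∀ i, DecidablePred (· ∈ Fi i)]
    (hno : ∀ i (q : Qst i) (a : σ), δi i q a ≠ qinit i)
    (hqF : ∀ i, qinit i ∉ Fi i)
    (w : List (Alph σ)) :
    (∀ i : Fin n, ∃ (q : StA Qst) (p : Qst i),
        deltaStar (phi δi qinit Fi) q w = Sum.inl ⟨i, p⟩) ↔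
    (∃ (j : Fin n) (q : StA Qst) (p : Qst j),
        deltaStar (phi δi qinit Fi) q w = Sum.inl ⟨j, p⟩) :=
  image_meets_all_iff_meets_some_general n hn σ Qst δi qinit Fi w
end

section
/- Every word in I is a reset word for the DFA 𝒜, i.e. I ⊆ Syn(𝒜). -/
section Aux

variable {n : ℕ} {σ : Type} {Qst : Fin n → Type}
    (δi : ∀ i, Qst i → σ → Qst i) (qinit : ∀ i, Qst i)
    (Fi : ∀ i, Set (Qst i)) [∀ i, DecidablePred (· ∈ Fi i)]

lemma phi_inr (b : Bool) (a : Alph σ) :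
    phi δi qinit Fi (Sum.inr b) a = sA := rfl

lemma deltaStar_sink (w : List (Alph σ)) :
    deltaStar (phi δi qinit Fi) sA w = sA := by
  induction w with
  | nil => rfl
  | cons a t ih =>
    simp only [deltaStar, List.foldl_cons] at ih ⊢
    exact ih

lemma phi_y (q : StA Qst) : phi δi qinit Fi q yL = sA := by
  rcases q with ⟨i, q⟩ | b
  · rfl
  · rfl

lemma phi_z (q : StA Qst) : ∃ b, phi δi qinit Fi q zL = Sum.inr b := by
  rcases q with ⟨i, q⟩ | b
  · by_cases h : q ∈ Fi i
    · exact ⟨false, by simp [phi, zL, h, sA]⟩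
    · exact ⟨true, by simp [phi, zL, h, hA]⟩
  · exact ⟨false, rfl⟩

end Aux

/-- Every word in I is a reset word for the DFA 𝒜, i.e. I ⊆ Syn(𝒜). -/
theorem I_subset_syn_A
    (n : ℕ) (hn : 0 < n) (σ : Type) [Fintype σ]
    (Qst : Fin n → Type) [∀ i, Fintype (Qst i)]
    (δi : ∀ i, Qst i → σ → Qst i) (qinit : ∀ i, Qst i)
    (Fi : ∀ i, Set (Qst i)) [∀ i, DecidablePred (· ∈ Fi i)]
    (hno : ∀ i (q : Qst i) (a : σ), δi i q a ≠ qinit i)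
    (hqF : ∀ i, qinit i ∉ Fi i) :
    ISet ⊆ Syn (phi δi qinit Fi) := by
  rintro w (⟨u, v, _, rfl⟩ | ⟨u, v, _, hv, rfl⟩) <;> intro q q'
  · -- L1 case: after y everything is the sink s
    have key : ∀ p : StA Qst,
        deltaStar (phi δi qinit Fi) p (u ++ yL :: v) = sA := by
      intro p
      simp only [deltaStar, List.foldl_append, List.foldl_cons]
      rw [phi_y]
      exact deltaStar_sink δi qinit Fi v
    rw [key, key]
  · -- L2 case: after z everything is s or h; one more letter gives s
    obtain ⟨a, t, rfl⟩ := List.exists_cons_of_ne_nil hv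
    have key : ∀ p : StA Qst,
        deltaStar (phi δi qinit Fi) p (u ++ zL :: a :: t) = sA := by
      intro p
      simp only [deltaStar, List.foldl_append, List.foldl_cons]
      obtain ⟨b, hb⟩ := phi_z δi qinit Fi
        (List.foldl (phi δi qinit Fi) p u)
      rw [hb, phi_inr]
      exact deltaStar_sink δi qinit Fi t
    rw [key, key]
end

section
/- If the intersection ⋂_{i=1}^{n} L[M_i] is empty, then every reset word of the DFA 𝒜 belongs to I, i.e. Syn(𝒜) ⊆ I. -/
section Aux
variable {n : ℕ} {σ : Type} {Qst : Fin n → Type}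
  (δi : ∀ i, Qst i → σ → Qst i) (qinit : ∀ i, Qst i)
  (Fi : ∀ i, Set (Qst i)) [∀ i, DecidablePred (· ∈ Fi i)]

/-- sink stays sink -/
lemma sink_run (w : List (Alph σ)) :
    deltaStar (phi δi qinit Fi) (sA : StA Qst) w = sA := by
  induction w with
  | nil => rfl
  | cons c w ih =>
    have h1 : phi δi qinit Fi sA c = sA := rfl
    show List.foldl (phi δi qinit Fi) (phi δi qinit Fi sA c) w = sA
    rw [h1]; exact ih

lemma noYZ_cons {c : Alph σ} {w : List (Alph σ)} :
    noYZ (c :: w) ↔ c ≠ yL ∧ c ≠ zL ∧ noYZ w := by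
  constructor
  · rintro ⟨hy, hz⟩
    simp only [List.mem_cons, not_or] at hy hz
    exact ⟨fun e => hy.1 e.symm, fun e => hz.1 e.symm, hy.2, hz.2⟩
  · rintro ⟨hy, hz, h1, h2⟩
    exact ⟨by simp only [List.mem_cons, not_or]; exact ⟨fun e => hy e.symm, h1⟩,
           by simp only [List.mem_cons, not_or]; exact ⟨fun e => hz e.symm, h2⟩⟩

/-- noYZ words keep you in the components -/
lemma noYZ_run (w : List (Alph σ)) (i : Fin n) :
    ∀ q : Qst i, noYZ w →
    ∃ q', deltaStar (phi δi qinit Fi) (Sum.inl ⟨i, q⟩) w = Sum.inl ⟨i, q'⟩ := by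
  induction w with
  | nil => exact fun q _ => ⟨q, rfl⟩
  | cons c w ih =>
    intro q hw
    obtain ⟨hy, hz, hw'⟩ := noYZ_cons.mp hw
    match c with
    | Sum.inl a => exact ih (δi i q a) hw'
    | Sum.inr 0 => exact ih (qinit i) hw'
    | Sum.inr 1 => exact absurd rfl hy
    | Sum.inr 2 => exact absurd rfl hz

lemma noYZ_append_singleton {u : List (Alph σ)} {c : Alph σ}
    (h : noYZ (u ++ [c])) : noYZ u ∧ c ≠ yL ∧ c ≠ zL := by
  obtain ⟨hy, hz⟩ := h
  simp only [List.mem_append, List.mem_singleton, not_or] at hy hz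
  exact ⟨⟨hy.1, hz.1⟩, fun e => hy.2 e.symm, fun e => hz.2 e.symm⟩

/-- From initial states, a noYZ word acts like some Σ-word read from the initial state. -/
lemma init_run (u : List (Alph σ)) (hu : noYZ u) :
    ∃ t : List σ, ∀ i, deltaStar (phi δi qinit Fi) (Sum.inl ⟨i, qinit i⟩) u
      = Sum.inl ⟨i, deltaStar (δi i) (qinit i) t⟩ := by
  induction u using List.reverseRecOn with
  | nil => exact ⟨[], fun i => rfl⟩
  | append_singleton u c ih =>
    obtain ⟨hu', hcy, hcz⟩ := noYZ_append_singleton hu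
    obtain ⟨t, ht⟩ := ih hu'
    match c with
    | Sum.inl a =>
      refine ⟨t ++ [a], fun i => ?_⟩
      simp only [deltaStar, List.foldl_append, List.foldl_cons, List.foldl_nil]
      rw [show (u.foldl (phi δi qinit Fi) (Sum.inl ⟨i, qinit i⟩)) =
        Sum.inl ⟨i, deltaStar (δi i) (qinit i) t⟩ from ht i]
      rfl
    | Sum.inr 0 =>
      refine ⟨[], fun i => ?_⟩
      simp only [deltaStar, List.foldl_append, List.foldl_cons, List.foldl_nil]
      rw [show (u.foldl (phi δi qinit Fi) (Sum.inl ⟨i, qinit i⟩)) =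
        Sum.inl ⟨i, deltaStar (δi i) (qinit i) t⟩ from ht i]
      rfl
    | Sum.inr 1 => exact absurd rfl hcy
    | Sum.inr 2 => exact absurd rfl hcz

/-- Decomposition of an arbitrary word. -/
lemma decomposeYZ (w : List (Alph σ)) :
    noYZ w ∨ ∃ (u : List (Alph σ)) (c : Alph σ) (v : List (Alph σ)), noYZ u ∧ (c = yL ∨ c = zL) ∧ w = u ++ c :: v := by
  induction w with
  | nil => exact Or.inl ⟨by simp, by simp⟩
  | cons c w ih =>
    match c with
    | Sum.inr 1 => exact Or.inr ⟨[], yL, w, ⟨by simp, by simp⟩, Or.inl rfl, rfl⟩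
    | Sum.inr 2 => exact Or.inr ⟨[], zL, w, ⟨by simp, by simp⟩, Or.inr rfl, rfl⟩
    | Sum.inl a =>
      rcases ih with h | ⟨u, c', v, hu, hc, rfl⟩
      · exact Or.inl (noYZ_cons.mpr ⟨by simp [yL], by simp [zL], h⟩)
      · exact Or.inr ⟨Sum.inl a :: u, c', v,
          noYZ_cons.mpr ⟨by simp [yL], by simp [zL], hu⟩, hc, rfl⟩
    | Sum.inr 0 =>
      rcases ih with h | ⟨u, c', v, hu, hc, rfl⟩
      · exact Or.inl (noYZ_cons.mpr ⟨by simp [yL], by simp [zL], h⟩)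
      · exact Or.inr ⟨Sum.inr 0 :: u, c', v,
          noYZ_cons.mpr ⟨by simp [yL], by simp [zL], hu⟩, hc, rfl⟩

end Aux

/-- If ⋂ᵢ L[Mᵢ] = ∅ then Syn(𝒜) ⊆ I. -/
theorem syn_A_subset_I_of_empty_inter
    (n : ℕ) (hn : 0 < n) (σ : Type) [Fintype σ]
    (Qst : Fin n → Type) [∀ i, Fintype (Qst i)]
    (δi : ∀ i, Qst i → σ → Qst i) (qinit : ∀ i, Qst i)
    (Fi : ∀ i, Set (Qst i)) [∀ i, DecidablePred (· ∈ Fi i)]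
    (hno : ∀ i (q : Qst i) (a : σ), δi i q a ≠ qinit i)
    (hqF : ∀ i, qinit i ∉ Fi i)
    (hempty : (⋂ i, LM δi qinit Fi i) = ∅) :
    Syn (phi δi qinit Fi) ⊆ ISet := by
  intro w hw
  rcases decomposeYZ w with hno' | ⟨u, c, v, hu, hc, rfl⟩
  · -- w contains no y or z: contradiction with reset
    exfalso
    obtain ⟨q', hq'⟩ := noYZ_run δi qinit Fi w ⟨0, hn⟩ (qinit ⟨0, hn⟩) hno'
    have hs : deltaStar (phi δi qinit Fi) (Sum.inr false : StA Qst) w = Sum.inr false := sink_run δi qinit Fi w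
    have := hw (Sum.inl ⟨⟨0, hn⟩, qinit ⟨0, hn⟩⟩) (Sum.inr false)
    rw [hq', hs] at this
    exact absurd this (by simp [sA])
  · rcases hc with rfl | rfl
    · exact Or.inl ⟨u, v, hu, rfl⟩
    · rcases List.eq_nil_or_concat v with rfl | ⟨v', c', rfl⟩
      · -- w = u ++ [z]: derive contradiction with hempty
        exfalso
        obtain ⟨t, ht⟩ := init_run δi qinit Fi u hu
        have hmem : t ∈ ⋂ i, LM δi qinit Fi i := by
          rw [Set.mem_iInter]
          intro i
          have hreset := hw (Sum.inl ⟨i, qinit i⟩) (Sum.inr false)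
          have hs : deltaStar (phi δi qinit Fi) (Sum.inr false : StA Qst) (u ++ [zL]) = Sum.inr false := sink_run δi qinit Fi (u ++ [zL])
          rw [hs] at hreset
          have : deltaStar (phi δi qinit Fi) (Sum.inl ⟨i, qinit i⟩) (u ++ [zL])
              = phi δi qinit Fi (Sum.inl ⟨i, deltaStar (δi i) (qinit i) t⟩) zL := by
            simp only [deltaStar, List.foldl_append, List.foldl_cons, List.foldl_nil]
            rw [show (u.foldl (phi δi qinit Fi) (Sum.inl ⟨i, qinit i⟩)) =
              Sum.inl ⟨i, deltaStar (δi i) (qinit i) t⟩ from ht i]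
            rfl
          rw [this] at hreset
          by_contra hF
          have hp : deltaStar (δi i) (qinit i) t ∉ Fi i := hF
          have hz2 : phi δi qinit Fi (Sum.inl ⟨i, deltaStar (δi i) (qinit i) t⟩) zL
              = hA := by
            show (if (2 : Fin 3) = 0 then (Sum.inl ⟨i, qinit i⟩ : StA Qst)
              else if (2 : Fin 3) = 1 then sA
              else if deltaStar (δi i) (qinit i) t ∈ Fi i then sA else hA) = hA
            rw [if_neg (by decide), if_neg (by decide), if_neg hp]
          rw [hz2] at hreset
          exact absurd hreset (by simp [hA, sA])
        rw [hempty] at hmem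
        exact hmem
      · exact Or.inr ⟨u, v'.concat c', hu, by simp, rfl⟩
end

section
/- If w' ∈ ⋂_{i=1}^{n} L[M_i], then the word x w' z is a reset word for the DFA 𝒜 but x w' z does not belong to I. -/
lemma sink_deltaStar {n : ℕ} {σ : Type} {Qst : Fin n → Type}
    (δi : ∀ i, Qst i → σ → Qst i) (qinit : ∀ i, Qst i)
    (Fi : ∀ i, Set (Qst i)) [∀ i, DecidablePred (· ∈ Fi i)]
    (w : List (Alph σ)) :
    deltaStar (phi δi qinit Fi) (Sum.inr false) w = Sum.inr false := by
  induction w with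
  | nil => rfl
  | cons a t ih => simpa [deltaStar, phi, sA] using ih

lemma deltaStar_inl {n : ℕ} {σ : Type} {Qst : Fin n → Type}
    (δi : ∀ i, Qst i → σ → Qst i) (qinit : ∀ i, Qst i)
    (Fi : ∀ i, Set (Qst i)) [∀ i, DecidablePred (· ∈ Fi i)]
    (i : Fin n) (q : Qst i) (w : List σ) :
    deltaStar (phi δi qinit Fi) (Sum.inl ⟨i, q⟩) (w.map Sum.inl)
      = Sum.inl ⟨i, deltaStar (δi i) q w⟩ := by
  induction w generalizing q with
  | nil => rfl
  | cons a t ih => simpa [deltaStar, phi] using ih (δi i q a)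

/-- If w' ∈ ⋂ᵢ L[Mᵢ], then x w' z is a reset word for 𝒜 but x w' z ∉ I. -/
theorem xwz_reset_not_in_I
    (n : ℕ) (hn : 0 < n) (σ : Type) [Fintype σ]
    (Qst : Fin n → Type) [∀ i, Fintype (Qst i)]
    (δi : ∀ i, Qst i → σ → Qst i) (qinit : ∀ i, Qst i)
    (Fi : ∀ i, Set (Qst i)) [∀ i, DecidablePred (· ∈ Fi i)]
    (hno : ∀ i (q : Qst i) (a : σ), δi i q a ≠ qinit i)
    (hqF : ∀ i, qinit i ∉ Fi i)
    (w' : List σ) (hw' : ∀ i, w' ∈ LM δi qinit Fi i) :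
    IsReset (phi δi qinit Fi) (xL :: (w'.map Sum.inl ++ [zL])) ∧
    (xL :: (w'.map Sum.inl ++ [zL])) ∉ (ISet : Set (List (Alph σ))) := by
  have hall : ∀ q : StA Qst,
      deltaStar (phi δi qinit Fi) q (xL :: (w'.map Sum.inl ++ [zL])) = Sum.inr false := by
    intro q
    show deltaStar (phi δi qinit Fi) (phi δi qinit Fi q xL) (w'.map Sum.inl ++ [zL]) = _
    match q with
    | Sum.inr b =>
        have h0 : phi δi qinit Fi (Sum.inr b) xL = Sum.inr false := rfl
        rw [h0, sink_deltaStar]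
    | Sum.inl ⟨i, p⟩ =>
        have h1 : phi δi qinit Fi (Sum.inl ⟨i, p⟩) xL = Sum.inl ⟨i, qinit i⟩ := rfl
        rw [h1]
        have h2 : deltaStar (phi δi qinit Fi) (Sum.inl ⟨i, qinit i⟩)
            (w'.map Sum.inl ++ [zL]) =
            phi δi qinit Fi (Sum.inl ⟨i, deltaStar (δi i) (qinit i) w'⟩) zL := by
          rw [deltaStar, List.foldl_append,
            show (w'.map Sum.inl).foldl (phi δi qinit Fi) (Sum.inl ⟨i, qinit i⟩)
              = Sum.inl ⟨i, deltaStar (δi i) (qinit i) w'⟩ from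
              deltaStar_inl δi qinit Fi i (qinit i) w']
          rfl
        rw [h2]
        have hF : deltaStar (δi i) (qinit i) w' ∈ Fi i := hw' i
        simp [phi, zL, hF, sA]
  constructor
  · intro q q'
    rw [hall q, hall q']
  · rintro (⟨u, v, hu, heq⟩ | ⟨u, v, hu, hv, heq⟩)
    · have hy : (yL : Alph σ) ∈ xL :: (w'.map Sum.inl ++ [zL]) := by
        rw [heq]; simp
      simp only [List.mem_cons, List.mem_append, List.mem_map, List.mem_singleton] at hy
      rcases hy with h | h | h
      · exact absurd h (by simp [yL, xL])
      · obtain ⟨a, -, h⟩ := h; exact absurd h (by simp [yL])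
      · exact absurd h (by simp [yL, zL])
    · match u, heq with
      | [], heq =>
        simp only [List.nil_append, List.cons.injEq] at heq
        exact absurd heq.1.symm (by simp [xL, zL])
      | (c :: u'), heq =>
        simp only [List.cons_append, List.cons.injEq] at heq
        obtain ⟨hc, heq⟩ := heq
        obtain ⟨v₀, d, rfl⟩ := v.eq_nil_or_concat.resolve_left hv
        rw [List.concat_eq_append, show (zL : Alph σ) :: (v₀ ++ [d]) = (zL :: v₀) ++ [d] by simp,
          ← List.append_assoc] at heq
        have hlen : (w'.map Sum.inl : List (Alph σ)).length = (u' ++ zL :: v₀).length := by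
          have hl := congrArg List.length heq
          simp at hl
          simp
          omega
        obtain ⟨h1, -⟩ := List.append_inj heq hlen
        have hz : (zL : Alph σ) ∈ w'.map Sum.inl := by rw [h1]; simp
        obtain ⟨a, -, h⟩ := List.mem_map.mp hz
        exact absurd h (by simp [zL])
end
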